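/- arXiv:2011.09717 — 3 statements merged into one kernel-verified Lean document; each statement's English description precedes it below -/
import Mathlib

section
/- Let Γ be a symmetric clustering game on a finite simple graph G = (V,E) with c ≥ 2 colors and a positive distribution rule α with maximum disparity ᾱ, and suppose that every nonempty subset S ⊆ V satisfies |E[S]| ≤ 3|S| (as holds for every planar graph by Euler's formula). Then for every pure Nash equilibrium s and every strategy profile s*, u(s*) ≤ (4 + 3ᾱ)·u(s). -/
open Finset
open scoped Classical

variable {V : Type*}

noncomputable def edgesIn [Fintype V] (G : SimpleGraph V) (S : Finset V) : ℕ :=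
  (G.edgeFinset.filter fun e => ∀ v ∈ e, v ∈ S).card

noncomputable def maxDensity [Fintype V] (G : SimpleGraph V) : ℝ :=
  ⨆ S : {S : Finset V // S.Nonempty}, (edgesIn G S.1 : ℝ) / (S.1.card : ℝ)

noncomputable def maxDisparity (G : SimpleGraph V) (α : V → V → ℝ) : ℝ :=
  ⨆ p : {p : V × V // G.Adj p.1 p.2}, α p.1.1 p.1.2 / α p.1.2 p.1.1

noncomputable def util [Fintype V] (G : SimpleGraph V) (coord : V → V → Prop)
    (α w : V → V → ℝ) {c : ℕ} (q : V → Fin c → ℝ) (s : V → Fin c) (i : V) : ℝ :=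
  q i (s i) +
    ∑ j ∈ G.neighborFinset i,
      if (coord i j ∧ s i = s j) ∨ (¬ coord i j ∧ s i ≠ s j)
      then α i j / (α i j + α j i) * w i j else 0

noncomputable def welfare [Fintype V] (G : SimpleGraph V) (coord : V → V → Prop)
    (α w : V → V → ℝ) {c : ℕ} (q : V → Fin c → ℝ) (s : V → Fin c) : ℝ :=
  ∑ i, util G coord α w q s i

def IsNash [Fintype V] (G : SimpleGraph V) (coord : V → V → Prop)
    (α w : V → V → ℝ) {c : ℕ} (q : V → Fin c → ℝ) (s : V → Fin c) : Prop :=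
  ∀ (i : V) (k : Fin c),
    util G coord α w q (Function.update s i k) i ≤ util G coord α w q s i

noncomputable def utilA [Fintype V] (G : SimpleGraph V) (w : V → V → ℝ)
    {c : ℕ} (s : V → Fin c) (i : V) : ℝ :=
  ∑ j ∈ G.neighborFinset i, if s i = s j then w i j / 2 else 0

noncomputable def welfareA [Fintype V] (G : SimpleGraph V) (w : V → V → ℝ)
    {c : ℕ} (s : V → Fin c) : ℝ :=
  ∑ i, utilA G w s i

def IsNashA [Fintype V] (G : SimpleGraph V) (w : V → V → ℝ)
    {c : ℕ} (St : V → Finset (Fin c)) (s : V → Fin c) : Prop :=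
  ∀ i, ∀ k ∈ St i, utilA G w (Function.update s i k) i ≤ utilA G w s i

def IsEpsKEq [Fintype V] (G : SimpleGraph V) (w : V → V → ℝ)
    {c : ℕ} (St : V → Finset (Fin c)) (ε : ℝ) (k : ℕ) (s : V → Fin c) : Prop :=
  ∀ K : Finset V, K.Nonempty → K.card ≤ k →
    ∀ s' : V → Fin c, (∀ i ∈ K, s' i ∈ St i) → (∀ i ∉ K, s' i = s i) →
      ∃ j ∈ K, utilA G w s' j ≤ ε * utilA G w s j

def IsGWS (G : SimpleGraph V) (α : V → V → ℝ) : Prop :=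
  ∃ (σ : V → ℕ) (γ : V → ℝ), Function.Injective σ ∧ (∀ i, 0 ≤ γ i) ∧
    ∀ i j, G.Adj i j →
      (α i j = 0 → σ i < σ j) ∧
      (0 < α i j → α i j / (α i j + α j i) = γ i / (γ i + γ j))

def BRStep [Fintype V] (G : SimpleGraph V) (coord : V → V → Prop)
    (α w : V → V → ℝ) {c : ℕ} (q : V → Fin c → ℝ) (s s' : V → Fin c) : Prop :=
  ∃ i, (∀ j, j ≠ i → s' j = s j) ∧
    util G coord α w q s i < util G coord α w q s' i ∧
    ∀ k : Fin c, util G coord α w q (Function.update s i k) i ≤ util G coord α w q s' i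

/-!
Compare `s*` with `s` edge by edge. In equilibrium player `i` could recolour so as to satisfy an
edge `{i, j}`, so its share `α i j / (α i j + α j i) * w i j` of that edge is at most `u_i(s)`,
whence `w i j ≤ (1 + ᾱ) u_i(s)`; by symmetry `w i j ≤ min (f i) (f j)` with `f = (1 + ᾱ) u(s)`.
Likewise `q_i(s*_i) ≤ u_i(s)`, and `u(s*)` is at most `∑ q_i(s*_i)` plus the total edge weight.
Finally, if `|E[S]| ≤ 3|S|` for all `S`, the sum of `min (f i) (f j)` over the edges is at most
`3 ∑ f`: subtracting the least value `m` of `f` on its support `S` lowers that sum by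
`m |E[S]| ≤ 3 m |S|` and `∑ f` by `m |S|`, and shrinks the support.
-/

lemma sum_card_adj_mem_eq_two_mul_edgesIn [Fintype V] (G : SimpleGraph V) (S : Finset V) :
    ∑ i, #{j ∈ G.neighborFinset i | i ∈ S ∧ j ∈ S} = 2 * edgesIn G S := by
  set H := ((⊤ : G.Subgraph).induce (S : Set V)).spanningCoe
  have hH : ∀ a b, H.Adj a b ↔ G.Adj a b ∧ a ∈ S ∧ b ∈ S := by
    intro a b; simp [H]; tauto
  have hedges : #H.edgeFinset = edgesIn G S := by
    unfold edgesIn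
    congr 1
    ext e
    induction e using Sym2.ind with
    | _ a b => simp [hH]
  rw [← hedges, ← H.sum_degrees_eq_twice_card_edges]
  refine Finset.sum_congr rfl fun i _ => ?_
  rw [← H.card_neighborFinset_eq_degree]
  congr 1
  ext j
  simp [hH]
lemma sum_sum_min_le_of_edgesIn_le_of_eq_zero [Fintype V] (G : SimpleGraph V) (d : ℕ)
    (hG : ∀ S : Finset V, S.Nonempty → edgesIn G S ≤ d * #S) (S : Finset V) (f : V → ℝ)
    (hf : ∀ v, 0 ≤ f v) (hfS : ∀ v ∉ S, f v = 0) :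
    ∑ i, ∑ j ∈ G.neighborFinset i, min (f i) (f j) ≤ 2 * d * ∑ i, f i := by
  induction S using Finset.strongInduction generalizing f with
  | H S ih =>
  rcases S.eq_empty_or_nonempty with rfl | hS
  · obtain rfl : f = 0 := funext fun v => hfS v (notMem_empty v)
    simp
  obtain ⟨v₀, hv₀, hmin⟩ := S.exists_min_image f hS
  set m := f v₀
  set g : V → ℝ := fun v => f v - if v ∈ S then m else 0 with hg_def
  have hg : ∀ v, 0 ≤ g v := by
    intro v
    by_cases hv : v ∈ S
    · simpa [hg_def, hv] using hmin v hv
    · simp [hg_def, hv, hfS v hv]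
  have hgS : ∀ v ∉ S.erase v₀, g v = 0 := by
    intro v hv
    rcases eq_or_ne v v₀ with rfl | hne
    · simp [hg_def, hv₀, m]
    · have hvS : v ∉ S := fun h => hv (mem_erase.mpr ⟨hne, h⟩)
      simp [hg_def, hvS, hfS v hvS]
  have hmin_split :
      ∀ i j, min (f i) (f j) = (if i ∈ S ∧ j ∈ S then m else 0) + min (g i) (g j) := by
    intro i j
    by_cases hij : i ∈ S ∧ j ∈ S
    · simp [hg_def, hij.1, hij.2, min_sub_sub_right]
    rw [if_neg hij, zero_add]
    have hg0 : ∀ v ∉ S, g v = 0 := fun v hv => hgS v fun h => hv (mem_of_mem_erase h)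
    rcases not_and_or.mp hij with hi | hj
    · rw [hfS i hi, hg0 i hi, min_eq_left (hf j), min_eq_left (hg j)]
    · rw [hfS j hj, hg0 j hj, min_eq_right (hf i), min_eq_right (hg i)]
  have hsum : ∑ i, f i = m * #S + ∑ i, g i := by
    simp [hg_def, sum_sub_distrib, sum_ite_mem]
    ring
  have hcount : (∑ i, #{j ∈ G.neighborFinset i | i ∈ S ∧ j ∈ S} : ℝ) ≤ 2 * d * #S := by
    exact_mod_cast (sum_card_adj_mem_eq_two_mul_edgesIn G S).trans_le (by linarith [hG S hS])
  have hm : 0 ≤ m := hf v₀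
  calc ∑ i, ∑ j ∈ G.neighborFinset i, min (f i) (f j)
      = m * ∑ i, (#{j ∈ G.neighborFinset i | i ∈ S ∧ j ∈ S} : ℝ)
        + ∑ i, ∑ j ∈ G.neighborFinset i, min (g i) (g j) := by
        simp only [hmin_split, sum_add_distrib, ← sum_filter, sum_const, nsmul_eq_mul, sum_mul,
          mul_comm m]
    _ ≤ m * (2 * d * #S) + 2 * d * ∑ i, g i := by
        gcongr
        exact ih _ (erase_ssubset hv₀) g hg hgS
    _ = 2 * d * ∑ i, f i := by rw [hsum]; ring

lemma sum_sum_min_le_of_edgesIn_le [Fintype V] (G : SimpleGraph V) (d : ℕ)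
    (hG : ∀ S : Finset V, S.Nonempty → edgesIn G S ≤ d * #S) (f : V → ℝ) (hf : ∀ v, 0 ≤ f v) :
    ∑ i, ∑ j ∈ G.neighborFinset i, min (f i) (f j) ≤ 2 * d * ∑ i, f i :=
  sum_sum_min_le_of_edgesIn_le_of_eq_zero G d hG univ f hf (by simp)

lemma sum_sum_neighborFinset_comm [Fintype V] {M : Type*} [AddCommMonoid M] (G : SimpleGraph V)
    (F : V → V → M) :
    ∑ i, ∑ j ∈ G.neighborFinset i, F i j = ∑ i, ∑ j ∈ G.neighborFinset i, F j i := by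
  simp only [SimpleGraph.neighborFinset_eq_filter, sum_filter]
  rw [sum_comm]
  simp only [G.adj_comm]

lemma div_le_maxDisparity [Finite V] {G : SimpleGraph V} (α : V → V → ℝ) {i j : V}
    (h : G.Adj i j) : α i j / α j i ≤ maxDisparity G α :=
  le_ciSup (f := fun p : {p : V × V // G.Adj p.1 p.2} => α p.1.1 p.1.2 / α p.1.2 p.1.1)
    (Set.finite_range _).bddAbove ⟨(i, j), h⟩

lemma maxDisparity_nonneg {G : SimpleGraph V} {α : V → V → ℝ}
    (hα : ∀ i j, G.Adj i j → 0 < α i j) : 0 ≤ maxDisparity G α :=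
  Real.iSup_nonneg fun p => (div_pos (hα _ _ p.2) (hα _ _ p.2.symm)).le

noncomputable def edgeShare (α w : V → V → ℝ) (i j : V) : ℝ := α i j / (α i j + α j i) * w i j

section Shares

variable {G : SimpleGraph V} {α w : V → V → ℝ} {i j : V}

lemma edgeShare_nonneg (hα : ∀ i j, G.Adj i j → 0 < α i j) (hw : ∀ i j, 0 ≤ w i j)
    (h : G.Adj i j) : 0 ≤ edgeShare α w i j :=
  mul_nonneg (div_nonneg (hα i j h).le (add_pos (hα i j h) (hα j i h.symm)).le) (hw i j)

lemma edgeShare_add_edgeShare (hα : ∀ i j, G.Adj i j → 0 < α i j)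
    (hwsymm : ∀ i j, w i j = w j i) (h : G.Adj i j) :
    edgeShare α w i j + edgeShare α w j i = w i j := by
  have := hα i j h
  have := hα j i h.symm
  rw [edgeShare, edgeShare, hwsymm j i]
  field_simp
  ring

lemma edgeShare_mul_one_add_div (hα : ∀ i j, G.Adj i j → 0 < α i j) (h : G.Adj i j) :
    edgeShare α w i j * (1 + α j i / α i j) = w i j := by
  have := hα i j h
  have := hα j i h.symm
  rw [edgeShare]
  field_simp

lemma sum_sum_edgeShare [Fintype V] (hα : ∀ i j, G.Adj i j → 0 < α i j)
    (hwsymm : ∀ i j, w i j = w j i) :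
    ∑ i, ∑ j ∈ G.neighborFinset i, edgeShare α w i j
      = (∑ i, ∑ j ∈ G.neighborFinset i, w i j) / 2 := by
  have hswap := sum_sum_neighborFinset_comm G (edgeShare α w)
  have hadd : ∑ i, ∑ j ∈ G.neighborFinset i, (edgeShare α w i j + edgeShare α w j i)
      = ∑ i, ∑ j ∈ G.neighborFinset i, w i j :=
    sum_congr rfl fun i _ => sum_congr rfl fun j hj =>
      edgeShare_add_edgeShare hα hwsymm ((G.mem_neighborFinset i j).mp hj)
  simp only [sum_add_distrib] at hadd
  linarith

end Shares

section Utility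

variable [Fintype V] {G : SimpleGraph V} {coord : V → V → Prop} {α w : V → V → ℝ} {c : ℕ}
  {q : V → Fin c → ℝ}

lemma util_eq (t : V → Fin c) (i : V) :
    util G coord α w q t i = q i (t i) + ∑ j ∈ G.neighborFinset i,
      if (coord i j ∧ t i = t j) ∨ (¬ coord i j ∧ t i ≠ t j) then edgeShare α w i j else 0 :=
  rfl

lemma q_le_util (hα : ∀ i j, G.Adj i j → 0 < α i j) (hw : ∀ i j, 0 ≤ w i j) (t : V → Fin c)
    (i : V) : q i (t i) ≤ util G coord α w q t i := by
  rw [util_eq, le_add_iff_nonneg_right]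
  refine sum_nonneg fun j hj => ?_
  split_ifs
  · exact edgeShare_nonneg hα hw ((G.mem_neighborFinset i j).mp hj)
  · exact le_rfl

lemma edgeShare_le_util (hα : ∀ i j, G.Adj i j → 0 < α i j) (hw : ∀ i j, 0 ≤ w i j)
    (hq : ∀ i k, 0 ≤ q i k) (t : V → Fin c) {i j : V} (h : G.Adj i j)
    (hsat : (coord i j ∧ t i = t j) ∨ (¬ coord i j ∧ t i ≠ t j)) :
    edgeShare α w i j ≤ util G coord α w q t i := by
  rw [util_eq]
  calc edgeShare α w i j
      = if (coord i j ∧ t i = t j) ∨ (¬ coord i j ∧ t i ≠ t j) then edgeShare α w i j else 0 :=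
        (if_pos hsat).symm
    _ ≤ ∑ j ∈ G.neighborFinset i,
          if (coord i j ∧ t i = t j) ∨ (¬ coord i j ∧ t i ≠ t j) then edgeShare α w i j else 0 :=
        single_le_sum (f := fun j =>
            if (coord i j ∧ t i = t j) ∨ (¬ coord i j ∧ t i ≠ t j) then edgeShare α w i j else 0)
          (fun j' hj' =>
            ite_nonneg (edgeShare_nonneg hα hw ((G.mem_neighborFinset i j').mp hj')) le_rfl)
          ((G.mem_neighborFinset i j).mpr h)
    _ ≤ _ := le_add_of_nonneg_left (hq i (t i))

lemma util_nonneg (hα : ∀ i j, G.Adj i j → 0 < α i j) (hw : ∀ i j, 0 ≤ w i j)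
    (hq : ∀ i k, 0 ≤ q i k) (t : V → Fin c) (i : V) : 0 ≤ util G coord α w q t i :=
  (hq i (t i)).trans (q_le_util hα hw t i)

lemma util_le_q_add_sum_edgeShare (hα : ∀ i j, G.Adj i j → 0 < α i j) (hw : ∀ i j, 0 ≤ w i j)
    (t : V → Fin c) (i : V) :
    util G coord α w q t i ≤ q i (t i) + ∑ j ∈ G.neighborFinset i, edgeShare α w i j := by
  rw [util_eq]
  gcongr with j hj
  split_ifs
  · exact le_rfl
  · exact edgeShare_nonneg hα hw ((G.mem_neighborFinset i j).mp hj)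

lemma welfare_le_sum_q_add_half_sum_weight (hα : ∀ i j, G.Adj i j → 0 < α i j)
    (hw : ∀ i j, 0 ≤ w i j) (hwsymm : ∀ i j, w i j = w j i) (t : V → Fin c) :
    welfare G coord α w q t ≤ ∑ i, q i (t i) + (∑ i, ∑ j ∈ G.neighborFinset i, w i j) / 2 :=
  calc welfare G coord α w q t
      ≤ ∑ i, (q i (t i) + ∑ j ∈ G.neighborFinset i, edgeShare α w i j) :=
        sum_le_sum fun i _ => util_le_q_add_sum_edgeShare hα hw t i
    _ = _ := by rw [sum_add_distrib, sum_sum_edgeShare hα hwsymm]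

namespace IsNash

variable {s : V → Fin c}

lemma q_le_util (hs : IsNash G coord α w q s) (hα : ∀ i j, G.Adj i j → 0 < α i j)
    (hw : ∀ i j, 0 ≤ w i j) (i : V) (k : Fin c) : q i k ≤ util G coord α w q s i := by
  simpa using (_root_.q_le_util hα hw (Function.update s i k) i).trans (hs i k)

lemma edgeShare_le_util (hs : IsNash G coord α w q s) (hc : 2 ≤ c)
    (hα : ∀ i j, G.Adj i j → 0 < α i j) (hw : ∀ i j, 0 ≤ w i j) (hq : ∀ i k, 0 ≤ q i k)
    {i j : V} (h : G.Adj i j) : edgeShare α w i j ≤ util G coord α w q s i := by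
  obtain ⟨k, hk⟩ : ∃ k, (coord i j ∧ k = s j) ∨ (¬ coord i j ∧ k ≠ s j) := by
    by_cases hij : coord i j
    · exact ⟨s j, .inl ⟨hij, rfl⟩⟩
    · have := Fin.nontrivial_iff_two_le.mpr hc
      obtain ⟨k, hk⟩ := exists_ne (s j)
      exact ⟨k, .inr ⟨hij, hk⟩⟩
  refine (_root_.edgeShare_le_util hα hw hq (Function.update s i k) h ?_).trans (hs i k)
  rwa [Function.update_self, Function.update_of_ne h.ne.symm]

lemma weight_le (hs : IsNash G coord α w q s) (hc : 2 ≤ c)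
    (hα : ∀ i j, G.Adj i j → 0 < α i j) (hw : ∀ i j, 0 ≤ w i j) (hq : ∀ i k, 0 ≤ q i k)
    {i j : V} (h : G.Adj i j) : w i j ≤ (1 + maxDisparity G α) * util G coord α w q s i :=
  calc w i j = edgeShare α w i j * (1 + α j i / α i j) := (edgeShare_mul_one_add_div hα h).symm
    _ ≤ util G coord α w q s i * (1 + maxDisparity G α) :=
        mul_le_mul (hs.edgeShare_le_util hc hα hw hq h)
          (by linarith [div_le_maxDisparity α h.symm])
          (add_pos one_pos (div_pos (hα j i h.symm) (hα i j h))).le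
          (util_nonneg hα hw hq s i)
    _ = _ := mul_comm _ _

end IsNash

end Utility

theorem stmt3_general [Fintype V] (G : SimpleGraph V) (coord : V → V → Prop)
    (c : ℕ) (hc : 2 ≤ c)
    (α w : V → V → ℝ) (q : V → Fin c → ℝ)
    (hα : ∀ i j, G.Adj i j → 0 < α i j)
    (hw : ∀ i j, 0 ≤ w i j) (hwsymm : ∀ i j, w i j = w j i)
    (hq : ∀ i k, 0 ≤ q i k)
    (hplanar : ∀ S : Finset V, S.Nonempty → edgesIn G S ≤ 3 * S.card)
    (s sstar : V → Fin c) (hs : IsNash G coord α w q s) :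
    welfare G coord α w q sstar ≤
      (4 + 3 * maxDisparity G α) * welfare G coord α w q s := by
  set f : V → ℝ := fun i => (1 + maxDisparity G α) * util G coord α w q s i
  have hf : ∀ i, 0 ≤ f i := fun i =>
    mul_nonneg (by linarith [maxDisparity_nonneg hα]) (util_nonneg hα hw hq s i)
  have hq_le : ∑ i, q i (sstar i) ≤ welfare G coord α w q s :=
    sum_le_sum fun i _ => hs.q_le_util hα hw i (sstar i)
  have hw_le : ∑ i, ∑ j ∈ G.neighborFinset i, w i j
      ≤ ∑ i, ∑ j ∈ G.neighborFinset i, min (f i) (f j) := by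
    gcongr with i _ j hj
    have h := (G.mem_neighborFinset i j).mp hj
    exact le_min (hs.weight_le hc hα hw hq h) (hwsymm i j ▸ hs.weight_le hc hα hw hq h.symm)
  have hmin := sum_sum_min_le_of_edgesIn_le G 3 hplanar f hf
  have hf_sum : ∑ i, f i = (1 + maxDisparity G α) * welfare G coord α w q s := (mul_sum ..).symm
  calc welfare G coord α w q sstar
      ≤ ∑ i, q i (sstar i) + (∑ i, ∑ j ∈ G.neighborFinset i, w i j) / 2 :=
        welfare_le_sum_q_add_half_sum_weight hα hw hwsymm sstar
    _ ≤ welfare G coord α w q s + 3 * ((1 + maxDisparity G α) * welfare G coord α w q s) := by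
        push_cast at hmin
        linarith
    _ = (4 + 3 * maxDisparity G α) * welfare G coord α w q s := by ring

theorem stmt3 [Fintype V] (G : SimpleGraph V) (coord : V → V → Prop)
    (hcoord : ∀ i j, coord i j ↔ coord j i)
    (c : ℕ) (hc : 2 ≤ c)
    (α w : V → V → ℝ) (q : V → Fin c → ℝ)
    (hα : ∀ i j, G.Adj i j → 0 < α i j)
    (hw : ∀ i j, 0 ≤ w i j) (hwsymm : ∀ i j, w i j = w j i)
    (hq : ∀ i k, 0 ≤ q i k)
    (hplanar : ∀ S : Finset V, S.Nonempty → edgesIn G S ≤ 3 * S.card)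
    (s sstar : V → Fin c) (hs : IsNash G coord α w q s) :
    welfare G coord α w q sstar ≤
      (4 + 3 * maxDisparity G α) * welfare G coord α w q s :=
  stmt3_general G coord c hc α w q hα hw hwsymm hq hplanar s sstar hs
end

section
/- Let Γ be a symmetric clustering game on a finite simple graph G = (V, E_c ∪ E_a) with c ≥ 2 colors and the equal-split distribution rule. Then for every pure Nash equilibrium s and every strategy profile s*, u(s*) ≤ (5 + 2·ρ(G[E_c]))·u(s), where G[E_c] is the subgraph of G whose edge set consists of the coordination edges only. -/
open Finset
open scoped Classical

variable {V : Type*}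

/-!
Split `u(s*)` into the preference part `Q`, the coordination part `C` and the anti-coordination
part `A`. If every player deviates from the equilibrium `s` to its color in `s*`, it keeps at
least its preference and its satisfied anti-coordination edges `D` against `s`, so `Q + D ≤ u(s)`.
An anti-coordination edge satisfied by `s*` is satisfied by one of the two mixed pairs of `s` and
`s*` or by `s` itself, whence `A ≤ 2D + u(s)`. Deviating to the color of a coordination neighbour
shows `w_ij ≤ 2 u_i(s)`, and edge weights dominated by vertex weights `f` sum to at most
`ρ · Σ f`, so `C ≤ 2ρ u(s)`. Altogether `u(s*) ≤ (3 + 2ρ) u(s)`.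
-/

namespace SimpleGraph

variable [Fintype V] (H : SimpleGraph V)

lemma sum_sum_neighborFinset_comm (F : V → V → ℝ) :
    ∑ i, ∑ j ∈ H.neighborFinset i, F i j = ∑ i, ∑ j ∈ H.neighborFinset i, F j i :=
  Finset.sum_comm' fun i j => by simp [H.adj_comm]

lemma sum_sum_neighborFinset_eq_sum_dart (F : V → V → ℝ) :
    ∑ i, ∑ j ∈ H.neighborFinset i, F i j = ∑ d : H.Dart, F d.fst d.snd := by
  rw [Finset.sum_sigma']
  refine Finset.sum_bij' (fun x hx => ⟨(x.1, x.2), by simpa using hx⟩) (fun d _ => ⟨d.fst, d.snd⟩)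
    ?_ ?_ ?_ ?_ ?_ <;> simp

lemma sum_dart_edge (g : Sym2 V → ℝ) :
    ∑ d : H.Dart, g d.edge = 2 * ∑ e ∈ H.edgeFinset, g e := by
  rw [← Finset.sum_fiberwise_of_maps_to (t := H.edgeFinset) (g := Dart.edge) (fun d _ => by simp),
    Finset.mul_sum]
  refine Finset.sum_congr rfl fun e he => ?_
  rw [Finset.sum_congr rfl fun d hd => by rw [(Finset.mem_filter.1 hd).2], Finset.sum_const,
    H.dart_edge_fiber_card e (H.mem_edgeFinset.1 he), nsmul_eq_mul, Nat.cast_ofNat]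

lemma sum_sum_neighborFinset_sym2Mk (g : Sym2 V → ℝ) :
    ∑ i, ∑ j ∈ H.neighborFinset i, g s(i, j) = 2 * ∑ e ∈ H.edgeFinset, g e :=
  (H.sum_sum_neighborFinset_eq_sum_dart _).trans (H.sum_dart_edge g)

end SimpleGraph

section Density

variable [Fintype V] (H : SimpleGraph V)

lemma edgesIn_div_card_le_maxDensity {S : Finset V} (hS : S.Nonempty) :
    (edgesIn H S : ℝ) / #S ≤ maxDensity H :=
  le_ciSup (f := fun S : {S : Finset V // S.Nonempty} => (edgesIn H S.1 : ℝ) / #S.1)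
    (Set.finite_range _).bddAbove ⟨S, hS⟩

lemma edgesIn_le_maxDensity_mul_card {S : Finset V} (hS : S.Nonempty) :
    (edgesIn H S : ℝ) ≤ maxDensity H * #S := by
  have hcard : (0 : ℝ) < #S := by exact_mod_cast hS.card_pos
  rw [← div_le_iff₀ hcard]
  exact edgesIn_div_card_le_maxDensity H hS

lemma maxDensity_nonneg_of_nonempty {S : Finset V} (hS : S.Nonempty) : 0 ≤ maxDensity H :=
  (by positivity : (0 : ℝ) ≤ edgesIn H S / #S).trans (edgesIn_div_card_le_maxDensity H hS)

/-- Induction on `S`: subtracting the minimal weight `m` on `S` from all weights, `m` pays for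
the at most `ρ |S|` edges inside `S`, and what remains lives on the vertices of weight above `m`. -/
theorem sum_edgeFinset_filter_le_maxDensity_mul_sum (W : Sym2 V → ℝ) (f : V → ℝ)
    (hWf : ∀ e ∈ H.edgeFinset, ∀ v ∈ e, W e ≤ f v) (S : Finset V) (hf : ∀ v ∈ S, 0 ≤ f v) :
    ∑ e ∈ H.edgeFinset with ∀ v ∈ e, v ∈ S, W e ≤ maxDensity H * ∑ v ∈ S, f v := by
  induction S using Finset.strongInduction generalizing W f with
  | H S ih =>
  obtain rfl | hS := S.eq_empty_or_nonempty
  · rw [Finset.filter_false_of_mem fun e _ he => Finset.notMem_empty _ (he _ e.out_fst_mem)]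
    simp
  obtain ⟨v₀, hv₀, hmin⟩ := S.exists_min_image f hS
  set m := f v₀
  set S' := S.filter (m < f ·)
  have hS' : S' ⊂ S := Finset.filter_ssubset.2 ⟨v₀, hv₀, lt_irrefl m⟩
  have hρ := maxDensity_nonneg_of_nonempty H hS
  have hsub : H.edgeFinset.filter (∀ v ∈ ·, v ∈ S') ⊆ H.edgeFinset.filter (∀ v ∈ ·, v ∈ S) :=
    fun e he => by
      rw [Finset.mem_filter] at he ⊢
      exact ⟨he.1, fun v hv => Finset.mem_of_mem_filter v (he.2 v hv)⟩
  -- an edge of `S` leaving `S'` has an endpoint of minimal weight `m`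
  have hout : ∀ e ∈ H.edgeFinset.filter (∀ v ∈ ·, v ∈ S),
      e ∉ H.edgeFinset.filter (∀ v ∈ ·, v ∈ S') → W e - m ≤ 0 := by
    intro e he he'
    simp only [Finset.mem_filter, not_and, not_forall] at he he'
    obtain ⟨v, hv, hvS'⟩ := he' he.1
    have : f v ≤ m := not_lt.1 fun h => hvS' (Finset.mem_filter.2 ⟨he.2 v hv, h⟩)
    linarith [hWf e he.1 v hv]
  calc ∑ e ∈ H.edgeFinset with ∀ v ∈ e, v ∈ S, W e
      = ∑ e ∈ H.edgeFinset with ∀ v ∈ e, v ∈ S, (W e - m) + m * edgesIn H S := by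
        rw [Finset.sum_sub_distrib, Finset.sum_const, nsmul_eq_mul, edgesIn]; ring
    _ ≤ ∑ e ∈ H.edgeFinset with ∀ v ∈ e, v ∈ S', (W e - m) + m * (maxDensity H * #S) :=
        add_le_add (Finset.sum_le_sum_of_subset_of_nonpos' hsub hout)
          (mul_le_mul_of_nonneg_left (edgesIn_le_maxDensity_mul_card H hS) (hf v₀ hv₀))
    _ ≤ maxDensity H * ∑ v ∈ S', (f v - m) + m * (maxDensity H * #S) := by
        gcongr
        exact ih S' hS' _ _ (fun e he v hv => by linarith [hWf e he v hv])
          fun v hv => by linarith [hmin v (Finset.mem_of_mem_filter v hv)]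
    _ ≤ maxDensity H * ∑ v ∈ S, (f v - m) + m * (maxDensity H * #S) := by
        gcongr
        intro v hv _
        linarith [hmin v hv]
    _ = maxDensity H * ∑ v ∈ S, f v := by
        rw [Finset.sum_sub_distrib, Finset.sum_const, nsmul_eq_mul]; ring

lemma sum_edgeFinset_le_maxDensity_mul_sum (W : Sym2 V → ℝ) (f : V → ℝ)
    (hWf : ∀ e ∈ H.edgeFinset, ∀ v ∈ e, W e ≤ f v) (hf : ∀ v, 0 ≤ f v) :
    ∑ e ∈ H.edgeFinset, W e ≤ maxDensity H * ∑ v, f v := by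
  have := sum_edgeFinset_filter_le_maxDensity_mul_sum H W f hWf Finset.univ fun v _ => hf v
  rwa [Finset.filter_true_of_mem fun e _ v _ => Finset.mem_univ v] at this

end Density

section ClusteringGame

variable [Fintype V] (G : SimpleGraph V) (coord : V → V → Prop) (w : V → V → ℝ) {c : ℕ}

/-- The coordination part of the equal-split payoff of player `i` playing color `k` against the
profile `s`; `antiGain` is the anti-coordination part. -/
noncomputable def coordGain (s : V → Fin c) (i : V) (k : Fin c) : ℝ :=
  ∑ j ∈ G.neighborFinset i, if coord i j ∧ k = s j then w i j / 2 else 0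

noncomputable def antiGain (s : V → Fin c) (i : V) (k : Fin c) : ℝ :=
  ∑ j ∈ G.neighborFinset i, if ¬coord i j ∧ k ≠ s j then w i j / 2 else 0

variable {w}

lemma coordGain_nonneg (hw : ∀ i j, 0 ≤ w i j) (s : V → Fin c) (i : V) (k : Fin c) :
    0 ≤ coordGain G coord w s i k :=
  Finset.sum_nonneg fun j _ => by split_ifs <;> linarith [hw i j]

lemma antiGain_nonneg (hw : ∀ i j, 0 ≤ w i j) (s : V → Fin c) (i : V) (k : Fin c) :
    0 ≤ antiGain G coord w s i k :=
  Finset.sum_nonneg fun j _ => by split_ifs <;> linarith [hw i j]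

variable {G coord} (q : V → Fin c → ℝ)

lemma util_one_eq (s : V → Fin c) (i : V) :
    util G coord (fun _ _ => 1) w q s i
      = q i (s i) + coordGain G coord w s i (s i) + antiGain G coord w s i (s i) := by
  rw [util, add_assoc, coordGain, antiGain, ← Finset.sum_add_distrib]
  congr 1
  refine Finset.sum_congr rfl fun j _ => ?_
  by_cases h : coord i j <;> by_cases h' : s i = s j <;> simp [h, h'] <;> ring

lemma coordGain_update_self (s : V → Fin c) (i : V) (k : Fin c) :
    coordGain G coord w (Function.update s i k) i k = coordGain G coord w s i k :=
  Finset.sum_congr rfl fun j hj => by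
    rw [Function.update_of_ne (G.ne_of_adj ((G.mem_neighborFinset i j).1 hj)).symm]

lemma antiGain_update_self (s : V → Fin c) (i : V) (k : Fin c) :
    antiGain G coord w (Function.update s i k) i k = antiGain G coord w s i k :=
  Finset.sum_congr rfl fun j hj => by
    rw [Function.update_of_ne (G.ne_of_adj ((G.mem_neighborFinset i j).1 hj)).symm]

lemma util_one_update_self (s : V → Fin c) (i : V) (k : Fin c) :
    util G coord (fun _ _ => 1) w q (Function.update s i k) i
      = q i k + coordGain G coord w s i k + antiGain G coord w s i k := by
  rw [util_one_eq, Function.update_self, coordGain_update_self, antiGain_update_self]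

lemma util_one_nonneg (hw : ∀ i j, 0 ≤ w i j) (hq : ∀ i k, 0 ≤ q i k) (s : V → Fin c) (i : V) :
    0 ≤ util G coord (fun _ _ => 1) w q s i := by
  rw [util_one_eq]
  linarith [hq i (s i), coordGain_nonneg G coord hw s i (s i), antiGain_nonneg G coord hw s i (s i)]

lemma welfare_one_eq (s : V → Fin c) :
    welfare G coord (fun _ _ => 1) w q s
      = ∑ i, q i (s i) + ∑ i, coordGain G coord w s i (s i) + ∑ i, antiGain G coord w s i (s i) := by
  simp only [welfare, util_one_eq, Finset.sum_add_distrib]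

lemma antiGain_self_le_util (hw : ∀ i j, 0 ≤ w i j) (hq : ∀ i k, 0 ≤ q i k) (s : V → Fin c)
    (i : V) : antiGain G coord w s i (s i) ≤ util G coord (fun _ _ => 1) w q s i := by
  rw [util_one_eq]
  linarith [hq i (s i), coordGain_nonneg G coord hw s i (s i)]

lemma sum_antiGain_comm (hcoord : ∀ i j, coord i j ↔ coord j i) (hwsymm : ∀ i j, w i j = w j i)
    (s t : V → Fin c) :
    ∑ i, antiGain G coord w s i (t i) = ∑ i, antiGain G coord w t i (s i) := by
  simp only [antiGain]
  rw [G.sum_sum_neighborFinset_comm]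
  refine Finset.sum_congr rfl fun i _ => Finset.sum_congr rfl fun j _ => ?_
  simp only [hcoord j i, hwsymm j i, ne_comm]

/-- If `t i ≠ t j`, then `t i ≠ s j`, `s i ≠ t j` or `s i ≠ s j`. -/
lemma antiGain_self_le (hw : ∀ i j, 0 ≤ w i j) (s t : V → Fin c) (i : V) :
    antiGain G coord w t i (t i)
      ≤ antiGain G coord w s i (t i) + antiGain G coord w t i (s i)
        + antiGain G coord w s i (s i) := by
  simp only [antiGain, ← Finset.sum_add_distrib]
  refine Finset.sum_le_sum fun j _ => ?_
  have := hw i j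
  split_ifs <;> grind

lemma sum_coordGain_le_sum_edgeFinset {Gc : SimpleGraph V}
    (hGc : ∀ i j, Gc.Adj i j ↔ G.Adj i j ∧ coord i j) (hw : ∀ i j, 0 ≤ w i j)
    (hwsymm : ∀ i j, w i j = w j i) (t : V → Fin c) :
    ∑ i, coordGain G coord w t i (t i) ≤ ∑ e ∈ Gc.edgeFinset, Sym2.lift ⟨w, hwsymm⟩ e := by
  have hN : ∀ i, Gc.neighborFinset i = (G.neighborFinset i).filter (coord i) := fun i => by
    ext j; simp [hGc]
  calc ∑ i, coordGain G coord w t i (t i)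
      ≤ ∑ i, ∑ j ∈ Gc.neighborFinset i, Sym2.lift ⟨w, hwsymm⟩ s(i, j) / 2 := by
        refine Finset.sum_le_sum fun i _ => ?_
        simp only [hN, Finset.sum_filter, coordGain, Sym2.lift_mk]
        refine Finset.sum_le_sum fun j _ => ?_
        have := hw i j
        split_ifs <;> grind
    _ = 2 * ∑ e ∈ Gc.edgeFinset, Sym2.lift ⟨w, hwsymm⟩ e / 2 :=
        Gc.sum_sum_neighborFinset_sym2Mk fun e => Sym2.lift ⟨w, hwsymm⟩ e / 2
    _ = ∑ e ∈ Gc.edgeFinset, Sym2.lift ⟨w, hwsymm⟩ e := by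
        rw [Finset.mul_sum]
        exact Finset.sum_congr rfl fun _ _ => mul_div_cancel₀ _ two_ne_zero

lemma sum_antiGain_self_le (hw : ∀ i j, 0 ≤ w i j) (hq : ∀ i k, 0 ≤ q i k)
    (hcoord : ∀ i j, coord i j ↔ coord j i) (hwsymm : ∀ i j, w i j = w j i) (s t : V → Fin c) :
    ∑ i, antiGain G coord w t i (t i)
      ≤ 2 * ∑ i, antiGain G coord w s i (t i) + welfare G coord (fun _ _ => 1) w q s := by
  calc ∑ i, antiGain G coord w t i (t i)
      ≤ ∑ i, antiGain G coord w s i (t i) + ∑ i, antiGain G coord w t i (s i)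
        + ∑ i, antiGain G coord w s i (s i) := by
        simp only [← Finset.sum_add_distrib]
        exact Finset.sum_le_sum fun i _ => antiGain_self_le hw s t i
    _ ≤ 2 * ∑ i, antiGain G coord w s i (t i) + welfare G coord (fun _ _ => 1) w q s := by
        rw [← sum_antiGain_comm hcoord hwsymm s t, two_mul]
        gcongr
        exact Finset.sum_le_sum fun i _ => antiGain_self_le_util q hw hq s i

variable {q}

namespace IsNash

variable {s : V → Fin c} (hs : IsNash G coord (fun _ _ => 1) w q s)
include hs

lemma add_antiGain_le (hw : ∀ i j, 0 ≤ w i j) (i : V) (k : Fin c) :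
    q i k + antiGain G coord w s i k ≤ util G coord (fun _ _ => 1) w q s i := by
  have := hs i k
  rw [util_one_update_self] at this
  linarith [coordGain_nonneg G coord hw s i k]

/-- Deviating to the color of a coordination neighbour `j` secures half the weight of `ij`. -/
lemma weight_le_two_mul_util (hw : ∀ i j, 0 ≤ w i j) (hq : ∀ i k, 0 ≤ q i k) {i j : V}
    (hij : G.Adj i j) (hcoord : coord i j) :
    w i j ≤ 2 * util G coord (fun _ _ => 1) w q s i := by
  have hdev := hs i (s j)
  have hj : w i j / 2 ≤ coordGain G coord w s i (s j) := by
    have := Finset.single_le_sum (f := fun j' => if coord i j' ∧ s j = s j' then w i j' / 2 else 0)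
      (fun j' _ => by split_ifs <;> linarith [hw i j']) ((G.mem_neighborFinset i j).2 hij)
    simpa [hcoord, coordGain] using this
  rw [util_one_update_self] at hdev
  linarith [hq i (s j), antiGain_nonneg G coord hw s i (s j)]

lemma sum_add_sum_antiGain_le (hw : ∀ i j, 0 ≤ w i j) (t : V → Fin c) :
    ∑ i, q i (t i) + ∑ i, antiGain G coord w s i (t i) ≤ welfare G coord (fun _ _ => 1) w q s := by
  rw [← Finset.sum_add_distrib]
  exact Finset.sum_le_sum fun i _ => hs.add_antiGain_le hw i (t i)

lemma sum_coordGain_le {Gc : SimpleGraph V} (hGc : ∀ i j, Gc.Adj i j ↔ G.Adj i j ∧ coord i j)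
    (hw : ∀ i j, 0 ≤ w i j) (hq : ∀ i k, 0 ≤ q i k) (hcoord : ∀ i j, coord i j ↔ coord j i)
    (hwsymm : ∀ i j, w i j = w j i) (t : V → Fin c) :
    ∑ i, coordGain G coord w t i (t i)
      ≤ 2 * maxDensity Gc * welfare G coord (fun _ _ => 1) w q s := by
  have hWf : ∀ e ∈ Gc.edgeFinset, ∀ v ∈ e,
      Sym2.lift ⟨w, hwsymm⟩ e ≤ 2 * util G coord (fun _ _ => 1) w q s v := by
    intro e
    induction e using Sym2.ind with
    | h a b =>
    intro hab v hv
    obtain ⟨hG, hc⟩ := (hGc a b).1 (Gc.mem_edgeFinset.1 hab)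
    rcases Sym2.mem_iff.1 hv with rfl | rfl
    · exact hs.weight_le_two_mul_util hw hq hG hc
    · simpa [hwsymm v] using hs.weight_le_two_mul_util hw hq hG.symm ((hcoord a v).1 hc)
  calc ∑ i, coordGain G coord w t i (t i)
      ≤ ∑ e ∈ Gc.edgeFinset, Sym2.lift ⟨w, hwsymm⟩ e :=
        sum_coordGain_le_sum_edgeFinset hGc hw hwsymm t
    _ ≤ maxDensity Gc * ∑ v, 2 * util G coord (fun _ _ => 1) w q s v :=
        sum_edgeFinset_le_maxDensity_mul_sum Gc _ _ hWf
          fun v => mul_nonneg zero_le_two (util_one_nonneg q hw hq s v)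
    _ = 2 * maxDensity Gc * welfare G coord (fun _ _ => 1) w q s := by
        rw [← Finset.mul_sum, welfare]; ring

theorem welfare_le (hw : ∀ i j, 0 ≤ w i j) (hq : ∀ i k, 0 ≤ q i k)
    (hcoord : ∀ i j, coord i j ↔ coord j i) (hwsymm : ∀ i j, w i j = w j i)
    {Gc : SimpleGraph V} (hGc : ∀ i j, Gc.Adj i j ↔ G.Adj i j ∧ coord i j) (t : V → Fin c) :
    welfare G coord (fun _ _ => 1) w q t
      ≤ (3 + 2 * maxDensity Gc) * welfare G coord (fun _ _ => 1) w q s := by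
  have hQ : 0 ≤ ∑ i, q i (t i) := Finset.sum_nonneg fun i _ => hq i (t i)
  have hQD := hs.sum_add_sum_antiGain_le hw t
  have hA := sum_antiGain_self_le (G := G) q hw hq hcoord hwsymm s t
  have hC := hs.sum_coordGain_le hGc hw hq hcoord hwsymm t
  rw [welfare_one_eq]
  linarith

end IsNash

end ClusteringGame

theorem stmt6_general [Fintype V] (G Gc : SimpleGraph V) (coord : V → V → Prop)
    (hcoord : ∀ i j, coord i j ↔ coord j i)
    (hGc : ∀ i j, Gc.Adj i j ↔ G.Adj i j ∧ coord i j)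
    (c : ℕ)
    (w : V → V → ℝ) (q : V → Fin c → ℝ)
    (hw : ∀ i j, 0 ≤ w i j) (hwsymm : ∀ i j, w i j = w j i)
    (hq : ∀ i k, 0 ≤ q i k)
    (s sstar : V → Fin c)
    (hs : IsNash G coord (fun _ _ => 1) w q s) :
    welfare G coord (fun _ _ => 1) w q sstar ≤
      (5 + 2 * maxDensity Gc) * welfare G coord (fun _ _ => 1) w q s := by
  have hu : 0 ≤ welfare G coord (fun _ _ => 1) w q s :=
    Finset.sum_nonneg fun i _ => util_one_nonneg q hw hq s i
  calc welfare G coord (fun _ _ => 1) w q sstar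
      ≤ (3 + 2 * maxDensity Gc) * welfare G coord (fun _ _ => 1) w q s :=
        hs.welfare_le hw hq hcoord hwsymm hGc sstar
    _ ≤ (5 + 2 * maxDensity Gc) * welfare G coord (fun _ _ => 1) w q s := by gcongr; norm_num

theorem stmt6 [Fintype V] (G Gc : SimpleGraph V) (coord : V → V → Prop)
    (hcoord : ∀ i j, coord i j ↔ coord j i)
    (hGc : ∀ i j, Gc.Adj i j ↔ G.Adj i j ∧ coord i j)
    (c : ℕ) (hc : 2 ≤ c)
    (w : V → V → ℝ) (q : V → Fin c → ℝ)
    (hw : ∀ i j, 0 ≤ w i j) (hwsymm : ∀ i j, w i j = w j i)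
    (hq : ∀ i k, 0 ≤ q i k)
    (s sstar : V → Fin c)
    (hs : IsNash G coord (fun _ _ => 1) w q s) :
    welfare G coord (fun _ _ => 1) w q sstar ≤
      (5 + 2 * maxDensity Gc) * welfare G coord (fun _ _ => 1) w q s :=
  stmt6_general G Gc coord hcoord hGc c w q hw hwsymm hq s sstar hs
end

section
/- Let ε ≥ 1, k ≥ 2 and c ≥ 3, and let G be a finite simple graph with maximum degree Δ(G) > k − 1. Then there exist strategy sets S_i ⊆ [c] and nonnegative edge weights w such that the resulting asymmetric coordination game on G with equal-split distribution rule and no individual preferences has an (ε,k)-equilibrium s with u(s) = k − 1 > 0 and a strategy profile s* with u(s*) = (k−1) + ε·(Δ(G) − k + 1); hence u(s*)/u(s) ≥ ε·(Δ(G)/(k−1) − 1). -/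
open Finset
open scoped Classical

variable {V : Type*}

/-!
The game lives on a star around a vertex `v` of maximum degree: `k - 1` of its leaves (the set
`A`) get edge weight `1`, the remaining `Δ - k + 1` leaves get weight `ε`, all other edges weight
`0`. In `s`, `v` and `A` sit on a colour `x` and the other leaves on `z`, for welfare `k - 1`;
everybody on a common colour `y` gives welfare `(k - 1) + ε (Δ - k + 1)`. A coalition containing
a leaf of `A` cannot lift that leaf above its share `1/2`. A coalition leaving `A` in place can
only move `v` to `y`, where at most `k - 1` other leaves can join it, worth at most
`ε (k - 1) / 2 = ε u_v(s)`; the strategy sets keep the `ε`-leaves away from `x`, and all other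
players have utility `0` whatever happens.
-/

lemma sum_ite_eq_card_filter_mul {ι α R : Type*} [DecidableEq α] [NonAssocSemiring R]
    {S : Finset ι} {f : ι → R} {r : R} (hf : ∀ j ∈ S, f j = r) (t : ι → α) (x : α) :
    ∑ j ∈ S, (if x = t j then f j else 0) = #{j ∈ S | t j = x} * r := by
  rw [← sum_filter, sum_congr rfl fun j hj => hf j (mem_filter.1 hj).1, sum_const, nsmul_eq_mul]
  simp only [eq_comm]

noncomputable def starWeight (v : V) (A : Finset V) (ε : ℝ) (i j : V) : ℝ :=
  if i = v ∨ j = v then (if i ∈ A ∨ j ∈ A then 1 else ε) else 0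

section StarWeight

variable {v : V} {A : Finset V} {ε : ℝ}

lemma starWeight_nonneg (hε : 0 ≤ ε) (i j : V) : 0 ≤ starWeight v A ε i j := by
  unfold starWeight; split_ifs <;> linarith

lemma starWeight_comm (i j : V) : starWeight v A ε i j = starWeight v A ε j i := by
  simp only [starWeight, or_comm]

lemma starWeight_of_ne {i j : V} (hi : i ≠ v) (hj : j ≠ v) : starWeight v A ε i j = 0 := by
  simp [starWeight, hi, hj]

lemma starWeight_of_mem {a : V} (ha : a ∈ A) : starWeight v A ε a v = 1 := by
  simp [starWeight, ha]

lemma starWeight_center_of_mem {a : V} (ha : a ∈ A) : starWeight v A ε v a = 1 := by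
  simp [starWeight, ha]

lemma starWeight_center_of_notMem (hv : v ∉ A) {b : V} (hb : b ∉ A) :
    starWeight v A ε v b = ε := by
  simp [starWeight, hv, hb]

end StarWeight

section StarGame

variable [Fintype V] {G : SimpleGraph V} {c : ℕ} {v : V} {A : Finset V} {ε : ℝ}

lemma utilA_nonneg {w : V → V → ℝ} (hw : ∀ i j, 0 ≤ w i j) (t : V → Fin c) (i : V) :
    0 ≤ utilA G w t i :=
  sum_nonneg fun j _ => by split_ifs <;> linarith [hw i j]

lemma utilA_starWeight_of_not_adj (t : V → Fin c) {i : V} (hi : i ≠ v) (hiv : ¬G.Adj v i) :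
    utilA G (starWeight v A ε) t i = 0 :=
  sum_eq_zero fun j hj => by
    have hjv : j ≠ v := by rintro rfl; exact hiv ((G.mem_neighborFinset i j).1 hj).symm
    simp [starWeight_of_ne hi hjv]

lemma utilA_starWeight_of_adj (t : V → Fin c) {i : V} (hi : G.Adj v i) :
    utilA G (starWeight v A ε) t i = if t i = t v then starWeight v A ε i v / 2 else 0 :=
  sum_eq_single_of_mem v ((G.mem_neighborFinset i v).2 hi.symm) fun j _ hjv => by
    simp [starWeight_of_ne hi.ne' hjv]

lemma utilA_starWeight_center (hA : A ⊆ G.neighborFinset v) (t : V → Fin c) :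
    utilA G (starWeight v A ε) t v =
      (#{a ∈ A | t a = t v} + ε * #{b ∈ G.neighborFinset v \ A | t b = t v}) / 2 := by
  have hvA : v ∉ A := fun h => G.notMem_neighborFinset_self v (hA h)
  rw [utilA, ← union_sdiff_of_subset hA, sum_union disjoint_sdiff, union_sdiff_of_subset hA,
    sum_ite_eq_card_filter_mul (f := fun j => starWeight v A ε v j / 2) (r := 1 / 2)
      fun a ha => by rw [starWeight_center_of_mem ha],
    sum_ite_eq_card_filter_mul (f := fun j => starWeight v A ε v j / 2) (r := ε / 2) fun b hb => by
      rw [starWeight_center_of_notMem hvA (mem_sdiff.1 hb).2]]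
  ring

/-- Every edge with positive weight is incident to `v`, so both endpoints' shares of it are
counted in the utility of `v`. -/
lemma welfareA_starWeight (t : V → Fin c) :
    welfareA G (starWeight v A ε) t = 2 * utilA G (starWeight v A ε) t v := by
  have hleaves : ∑ i ∈ G.neighborFinset v, utilA G (starWeight v A ε) t i =
      utilA G (starWeight v A ε) t v :=
    sum_congr rfl fun i hi => by
      rw [utilA_starWeight_of_adj t ((G.mem_neighborFinset v i).1 hi), starWeight_comm]
      exact if_congr eq_comm rfl rfl
  have hothers : ∀ i ∉ insert v (G.neighborFinset v), utilA G (starWeight v A ε) t i = 0 :=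
    fun i hi => by
      rw [mem_insert, not_or, G.mem_neighborFinset] at hi
      exact utilA_starWeight_of_not_adj t hi.1 hi.2
  rw [welfareA, ← sum_subset (subset_univ _) fun i _ hi => hothers i hi,
    sum_insert (G.notMem_neighborFinset_self v), hleaves, two_mul]

variable (G v A) in
noncomputable def starStrategies (x y z : Fin c) (i : V) : Finset (Fin c) :=
  if i ∈ G.neighborFinset v \ A then {y, z} else {x, y}

variable (G v A) in
noncomputable def starProfile (x z : Fin c) (i : V) : Fin c :=
  if i ∈ G.neighborFinset v \ A then z else x

lemma starProfile_mem_starStrategies (x y z : Fin c) (i : V) :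
    starProfile G v A x z i ∈ starStrategies G v A x y z i := by
  unfold starProfile starStrategies; split_ifs <;> simp

lemma mem_starStrategies_of_middle (x y z : Fin c) (i : V) : y ∈ starStrategies G v A x y z i := by
  unfold starStrategies; split_ifs <;> simp

lemma starProfile_center {x z : Fin c} : starProfile G v A x z v = x := by
  simp [starProfile]

lemma starProfile_of_mem {x z : Fin c} {a : V} (ha : a ∈ A) : starProfile G v A x z a = x := by
  simp [starProfile, ha]

lemma utilA_starProfile_center (hA : A ⊆ G.neighborFinset v) {x z : Fin c} (hxz : x ≠ z) :
    utilA G (starWeight v A ε) (starProfile G v A x z) v = #A / 2 := by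
  have hfA : {a ∈ A | starProfile G v A x z a = starProfile G v A x z v} = A :=
    filter_true_of_mem fun a ha => by rw [starProfile_of_mem ha, starProfile_center]
  have hfB : {b ∈ G.neighborFinset v \ A |
      starProfile G v A x z b = starProfile G v A x z v} = ∅ :=
    filter_false_of_mem fun b hb => by simp [starProfile, hb, hxz.symm]
  rw [utilA_starWeight_center hA, hfA, hfB, card_empty, Nat.cast_zero, mul_zero, add_zero]

lemma welfareA_starProfile (hA : A ⊆ G.neighborFinset v) {x z : Fin c} (hxz : x ≠ z) :
    welfareA G (starWeight v A ε) (starProfile G v A x z) = #A := by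
  rw [welfareA_starWeight, utilA_starProfile_center hA hxz]
  ring

lemma welfareA_starWeight_const (hA : A ⊆ G.neighborFinset v) (y : Fin c) :
    welfareA G (starWeight v A ε) (fun _ => y) = #A + ε * #(G.neighborFinset v \ A) := by
  rw [welfareA_starWeight, utilA_starWeight_center hA, filter_true_of_mem fun _ _ => rfl,
    filter_true_of_mem fun _ _ => rfl]
  ring

lemma utilA_starProfile_of_mem (hA : A ⊆ G.neighborFinset v) {x z : Fin c} {a : V} (ha : a ∈ A) :
    utilA G (starWeight v A ε) (starProfile G v A x z) a = 1 / 2 := by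
  rw [utilA_starWeight_of_adj _ ((G.mem_neighborFinset v a).1 (hA ha)), starWeight_of_mem ha,
    if_pos (by rw [starProfile_of_mem ha, starProfile_center])]

section Deviation

variable {x y z : Fin c} {K : Finset V} {s' : V → Fin c}
  (hs'K : ∀ i ∈ K, s' i ∈ starStrategies G v A x y z i)
  (hs' : ∀ i ∉ K, s' i = starProfile G v A x z i)
include hs'K hs'

lemma ne_of_mem_sdiff_of_deviation (hxy : x ≠ y) (hxz : x ≠ z) {b : V}
    (hb : b ∈ G.neighborFinset v \ A) : s' b ≠ x := by
  by_cases hbK : b ∈ K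
  · have hb' := hs'K b hbK
    simp only [starStrategies, hb, if_true, mem_insert, mem_singleton] at hb'
    rcases hb' with h | h <;> rw [h]
    exacts [hxy.symm, hxz.symm]
  · rw [hs' b hbK]; simp [starProfile, hb, hxz.symm]

/-- With `A` fixed on `x`, the centre either stays with `A` or moves to `y`, where it can only be
joined by the at most `k - 1 ≤ #A` other members of `K`. -/
lemma utilA_center_le_of_deviation (hε : 1 ≤ ε) (hA : A ⊆ G.neighborFinset v) {k : ℕ}
    (hk : k ≤ #A + 1) (hxy : x ≠ y) (hxz : x ≠ z) (hyz : y ≠ z) (hKk : #K ≤ k) (hvK : v ∈ K)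
    (hKA : ∀ a ∈ K, a ∉ A) :
    utilA G (starWeight v A ε) s' v ≤
      ε * utilA G (starWeight v A ε) (starProfile G v A x z) v := by
  have hAx : ∀ a ∈ A, s' a = x := fun a ha => by
    rw [hs' a fun haK => hKA a haK ha, starProfile_of_mem ha]
  have hvxy : s' v = x ∨ s' v = y := by
    simpa [starStrategies, G.notMem_neighborFinset_self] using hs'K v hvK
  have hA0 : (0 : ℝ) ≤ #A := Nat.cast_nonneg _
  rw [utilA_starWeight_center hA, utilA_starProfile_center hA hxz]
  rcases hvxy with hv | hv
  · have hfB : {b ∈ G.neighborFinset v \ A | s' b = s' v} = ∅ :=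
      filter_false_of_mem fun b hb h =>
        ne_of_mem_sdiff_of_deviation hs'K hs' hxy hxz hb (h.trans hv)
    have hfA : (#{a ∈ A | s' a = s' v} : ℝ) ≤ #A := by exact_mod_cast card_filter_le _ _
    rw [hfB, card_empty, Nat.cast_zero, mul_zero, add_zero]
    nlinarith
  · have hfA : {a ∈ A | s' a = s' v} = ∅ :=
      filter_false_of_mem fun a ha h => hxy (by rw [← hAx a ha, h, hv])
    have hfB : {b ∈ G.neighborFinset v \ A | s' b = s' v} ⊆ K.erase v := fun b hb => by
      obtain ⟨hbB, hbv⟩ := mem_filter.1 hb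
      refine mem_erase.2 ⟨fun h => G.notMem_neighborFinset_self v (h ▸ (mem_sdiff.1 hbB).1), ?_⟩
      by_contra hbK
      rw [hs' b hbK, hv] at hbv
      simp only [starProfile, hbB, if_true] at hbv
      exact hyz hbv.symm
    have hcard : (#{b ∈ G.neighborFinset v \ A | s' b = s' v} : ℝ) ≤ #A := by
      have := card_le_card hfB
      rw [card_erase_of_mem hvK] at this
      exact_mod_cast (by omega : _ ≤ #A)
    rw [hfA, card_empty, Nat.cast_zero, zero_add]
    nlinarith

end Deviation

theorem isEpsKEq_starProfile (hε : 1 ≤ ε) (hA : A ⊆ G.neighborFinset v) {k : ℕ}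
    (hk : k ≤ #A + 1) {x y z : Fin c} (hxy : x ≠ y) (hxz : x ≠ z) (hyz : y ≠ z) :
    IsEpsKEq G (starWeight v A ε) (starStrategies G v A x y z) ε k (starProfile G v A x z) := by
  intro K hK hKk s' hs'K hs'
  by_cases hKA : ∃ a ∈ K, a ∈ A
  · obtain ⟨a, haK, ha⟩ := hKA
    refine ⟨a, haK, ?_⟩
    rw [utilA_starWeight_of_adj s' ((G.mem_neighborFinset v a).1 (hA ha)), starWeight_of_mem ha,
      utilA_starProfile_of_mem hA ha]
    split_ifs <;> linarith
  push Not at hKA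
  by_cases hvK : v ∈ K
  · exact ⟨v, hvK, utilA_center_le_of_deviation hs'K hs' hε hA hk hxy hxz hyz hKk hvK hKA⟩
  obtain ⟨j, hj⟩ := hK
  have hjv : j ≠ v := fun h => hvK (h ▸ hj)
  have hj0 : utilA G (starWeight v A ε) s' j = 0 := by
    by_cases hvj : G.Adj v j
    · have hjB : j ∈ G.neighborFinset v \ A :=
        mem_sdiff.2 ⟨(G.mem_neighborFinset v j).2 hvj, hKA j hj⟩
      rw [utilA_starWeight_of_adj s' hvj, hs' v hvK, starProfile_center,
        if_neg (ne_of_mem_sdiff_of_deviation hs'K hs' hxy hxz hjB)]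
    · exact utilA_starWeight_of_not_adj s' hjv hvj
  refine ⟨j, hj, ?_⟩
  rw [hj0]
  exact mul_nonneg (by linarith) (utilA_nonneg (starWeight_nonneg (by linarith)) _ _)

end StarGame

theorem stmt12 [Fintype V] (G : SimpleGraph V)
    (ε : ℝ) (hε : 1 ≤ ε) (k : ℕ) (hk : 2 ≤ k)
    (c : ℕ) (hc : 3 ≤ c)
    (hΔ : k - 1 < G.maxDegree) :
    ∃ (St : V → Finset (Fin c)) (w : V → V → ℝ),
      (∀ i, (St i).Nonempty) ∧ (∀ i j, 0 ≤ w i j) ∧ (∀ i j, w i j = w j i) ∧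
      ∃ s : V → Fin c, (∀ i, s i ∈ St i) ∧ IsEpsKEq G w St ε k s ∧
        welfareA G w s = (k : ℝ) - 1 ∧
        ∃ sstar : V → Fin c, (∀ i, sstar i ∈ St i) ∧
          welfareA G w sstar = ((k : ℝ) - 1) + ε * ((G.maxDegree : ℝ) - k + 1) := by
  have : Nonempty V := (isEmpty_or_nonempty V).resolve_left fun _ => by
    rw [G.maxDegree_of_subsingleton] at hΔ; omega
  obtain ⟨v, hv⟩ := G.exists_maximal_degree_vertex
  obtain ⟨A, hA, hAk⟩ := exists_subset_card_eq (s := G.neighborFinset v) (n := k - 1)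
    (by rw [G.card_neighborFinset_eq_degree]; omega)
  have hAk' : (#A : ℝ) = k - 1 := by rw [hAk, Nat.cast_sub (by omega), Nat.cast_one]
  have hBk : (#(G.neighborFinset v \ A) : ℝ) = G.maxDegree - k + 1 := by
    rw [card_sdiff_of_subset hA, G.card_neighborFinset_eq_degree, ← hv, Nat.cast_sub (by omega),
      hAk']
    ring
  let x : Fin c := ⟨0, by omega⟩
  let y : Fin c := ⟨1, by omega⟩
  let z : Fin c := ⟨2, by omega⟩
  have hxy : x ≠ y := by simp [x, y, Fin.ext_iff]
  have hxz : x ≠ z := by simp [x, z, Fin.ext_iff]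
  have hyz : y ≠ z := by simp [y, z, Fin.ext_iff]
  refine ⟨starStrategies G v A x y z, starWeight v A ε,
    fun i => ⟨y, mem_starStrategies_of_middle x y z i⟩, starWeight_nonneg (by linarith),
    starWeight_comm, starProfile G v A x z, starProfile_mem_starStrategies x y z,
    isEpsKEq_starProfile hε hA (by omega) hxy hxz hyz, by rw [welfareA_starProfile hA hxz, hAk'],
    fun _ => y, mem_starStrategies_of_middle x y z, by rw [welfareA_starWeight_const hA, hAk', hBk]⟩
end
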